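/- arXiv:2508.00538 — 4 statements merged into one kernel-verified Lean document; each statement's English description precedes it below -/
import Mathlib

section
/- Let A_1, A_2, A_3, ... be pairwise disjoint Buck measurable subsets of ℕ such that lim_{N→∞} μ*(⋃_{k=N}^∞ A_k) = 0. Then the set A = ⋃_{k=1}^∞ A_k is Buck measurable and μ(A) = Σ_{k=1}^∞ μ(A_k). -/
open scoped BigOperators

/-- Buck's measure density: the infimum of `∑ 1/mᵢ` over finite covers of `S`
by arithmetic progressions `{n | n ≡ rᵢ [MOD mᵢ]}`. -/
noncomputable def buckDensity (S : Set ℕ) : ℝ :=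
  sInf {x : ℝ | ∃ (k : ℕ) (r m : Fin k → ℕ), (∀ i, 0 < m i) ∧
    (S ⊆ ⋃ i, {n : ℕ | n ≡ r i [MOD m i]}) ∧ x = ∑ i, (1 : ℝ) / (m i)}

/-- A set is Buck measurable if `μ*(S) + μ*(ℕ \ S) = 1`. -/
def BuckMeasurable (S : Set ℕ) : Prop :=
  buckDensity S + buckDensity Sᶜ = 1

/-- `R(S : m)`: the number of residue classes modulo `m` occupied by `S`. -/
noncomputable def residueCount (S : Set ℕ) (m : ℕ) : ℕ :=
  ((fun s => s % m) '' S).ncard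

open Finset

namespace BuckAux

def coverSet (S : Set ℕ) : Set ℝ :=
  {x : ℝ | ∃ (k : ℕ) (r m : Fin k → ℕ), (∀ i, 0 < m i) ∧
    (S ⊆ ⋃ i, {n : ℕ | n ≡ r i [MOD m i]}) ∧ x = ∑ i, (1 : ℝ) / (m i)}

lemma buckDensity_def (S : Set ℕ) : buckDensity S = sInf (coverSet S) := rfl

lemma one_mem (S : Set ℕ) : (1:ℝ) ∈ coverSet S := by
  refine ⟨1, fun _ => 0, fun _ => 1, fun i => one_pos, ?_, by simp⟩
  intro n _
  exact Set.mem_iUnion.2 ⟨0, by simp [Nat.ModEq, Nat.mod_one]⟩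

lemma nonneg_mem {S : Set ℕ} {x : ℝ} (hx : x ∈ coverSet S) : 0 ≤ x := by
  obtain ⟨k, r, m, hm, _, rfl⟩ := hx
  positivity

lemma bddBelow_cover (S : Set ℕ) : BddBelow (coverSet S) :=
  ⟨0, fun _ hx => nonneg_mem hx⟩

lemma buckDensity_nonneg (S : Set ℕ) : 0 ≤ buckDensity S :=
  le_csInf ⟨1, one_mem S⟩ fun _ hx => nonneg_mem hx

lemma buckDensity_le {S : Set ℕ} {x : ℝ} (hx : x ∈ coverSet S) : buckDensity S ≤ x :=
  csInf_le (bddBelow_cover S) hx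

lemma cover_mono {S T : Set ℕ} (h : S ⊆ T) {x : ℝ} (hx : x ∈ coverSet T) : x ∈ coverSet S := by
  obtain ⟨k, r, m, hm, hc, rfl⟩ := hx
  exact ⟨k, r, m, hm, h.trans hc, rfl⟩

lemma buckDensity_mono {S T : Set ℕ} (h : S ⊆ T) : buckDensity S ≤ buckDensity T :=
  le_csInf ⟨1, one_mem T⟩ fun x hx => buckDensity_le (cover_mono h hx)

lemma buckDensity_empty : buckDensity (∅ : Set ℕ) = 0 := by
  refine le_antisymm (buckDensity_le ?_) (buckDensity_nonneg _)
  exact ⟨0, Fin.elim0, Fin.elim0, fun i => i.elim0, by simp, by simp⟩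

lemma union_mem {S T : Set ℕ} {x y : ℝ} (hx : x ∈ coverSet S) (hy : y ∈ coverSet T) :
    x + y ∈ coverSet (S ∪ T) := by
  obtain ⟨k, r, m, hm, hc, rfl⟩ := hx
  obtain ⟨l, r', m', hm', hc', rfl⟩ := hy
  refine ⟨k + l, Fin.append r r', Fin.append m m', ?_, ?_, ?_⟩
  · intro i
    refine Fin.addCases (fun i => ?_) (fun i => ?_) i
    · simpa using hm i
    · simpa using hm' i
  · rintro n (hn | hn)
    · obtain ⟨i, hi⟩ := Set.mem_iUnion.1 (hc hn)
      exact Set.mem_iUnion.2 ⟨Fin.castAdd l i, by simpa using hi⟩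
    · obtain ⟨i, hi⟩ := Set.mem_iUnion.1 (hc' hn)
      exact Set.mem_iUnion.2 ⟨Fin.natAdd k i, by simpa using hi⟩
  · rw [Fin.sum_univ_add]
    simp

lemma buckDensity_union_le (S T : Set ℕ) :
    buckDensity (S ∪ T) ≤ buckDensity S + buckDensity T := by
  have h1 : ∀ x ∈ coverSet S, buckDensity (S ∪ T) - x ≤ buckDensity T := by
    intro x hx
    refine le_csInf ⟨1, one_mem T⟩ fun y hy => ?_
    have := buckDensity_le (union_mem hx hy)
    linarith
  have h2 : buckDensity (S ∪ T) - buckDensity T ≤ buckDensity S := by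
    refine le_csInf ⟨1, one_mem S⟩ fun x hx => ?_
    linarith [h1 x hx]
  linarith

lemma card_residues {m M : ℕ} (hm : 0 < m) (hdvd : m ∣ M) (r : ℕ) :
    ((Finset.range M).filter (fun x => x % m = r % m)).card = M / m := by
  have himg : (Finset.range M).filter (fun x => x % m = r % m) =
      (Finset.range (M / m)).image (fun j => r % m + j * m) := by
    ext x
    simp only [mem_filter, mem_range, mem_image]
    constructor
    · rintro ⟨hx, he⟩
      refine ⟨x / m, Nat.div_lt_div_of_lt_of_dvd hdvd hx, ?_⟩
      rw [← he]
      rw [Nat.mul_comm]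
      exact (Nat.mod_add_div x m)
    · rintro ⟨j, hj, rfl⟩
      have h1 : (j + 1) * m ≤ M := by
        have : j + 1 ≤ M / m := hj
        calc (j + 1) * m ≤ M / m * m := Nat.mul_le_mul_right m this
          _ = M := Nat.div_mul_cancel hdvd
      constructor
      · have : r % m < m := Nat.mod_lt _ hm
        calc r % m + j * m < m + j * m := by omega
          _ = (j + 1) * m := by ring
          _ ≤ M := h1
      · simp [Nat.add_mul_mod_self_right, Nat.mod_mod_of_dvd r (dvd_refl m)]
  rw [himg, Finset.card_image_of_injOn, Finset.card_range]
  intro a _ b _ hab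
  simp only at hab
  have := Nat.add_left_cancel hab
  exact Nat.eq_of_mul_eq_mul_right hm this

lemma key {S T : Set ℕ} (hST : ∀ n, n ∈ S ∨ n ∈ T) {x y : ℝ}
    (hx : x ∈ coverSet S) (hy : y ∈ coverSet T) :
    buckDensity (S ∩ T) ≤ x + y - 1 := by
  classical
  obtain ⟨k, r, m, hm, hc, rfl⟩ := hx
  obtain ⟨l, r', m', hm', hc', rfl⟩ := hy
  set M : ℕ := (∏ i, m i) * (∏ j, m' j) with hMdef
  have hMpos : 0 < M :=
    mul_pos (Finset.prod_pos fun i _ => hm i) (Finset.prod_pos fun j _ => hm' j)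
  have hdvd1 : ∀ i, m i ∣ M := fun i =>
    Dvd.dvd.mul_right (Finset.dvd_prod_of_mem m (mem_univ i)) _
  have hdvd2 : ∀ j, m' j ∣ M := fun j =>
    Dvd.dvd.mul_left (Finset.dvd_prod_of_mem m' (mem_univ j)) _
  set P := (Finset.range M).filter (fun x => ∃ i, x ≡ r i [MOD m i]) with hP
  set Q := (Finset.range M).filter (fun x => ∃ j, x ≡ r' j [MOD m' j]) with hQ
  have hPQ : P ∪ Q = Finset.range M := by
    apply Finset.Subset.antisymm
    · exact Finset.union_subset (filter_subset _ _) (filter_subset _ _)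
    · intro x hxr
      rcases hST x with h | h
      · exact Finset.mem_union_left _ (mem_filter.2 ⟨hxr, by
          simpa using Set.mem_iUnion.1 (hc h)⟩)
      · exact Finset.mem_union_right _ (mem_filter.2 ⟨hxr, by
          simpa using Set.mem_iUnion.1 (hc' h)⟩)
  have cardP : P.card ≤ ∑ i, M / m i := by
    have hsub : P ⊆ univ.biUnion
        (fun i => (Finset.range M).filter (fun x => x % m i = r i % m i)) := by
      intro x hxP
      obtain ⟨hxr, i, hi⟩ := mem_filter.1 hxP
      exact Finset.mem_biUnion.2 ⟨i, mem_univ i, mem_filter.2 ⟨hxr, hi⟩⟩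
    calc P.card ≤ _ := Finset.card_le_card hsub
      _ ≤ ∑ i, ((Finset.range M).filter (fun x => x % m i = r i % m i)).card :=
          Finset.card_biUnion_le
      _ = ∑ i, M / m i := by
          exact Finset.sum_congr rfl fun i _ => card_residues (hm i) (hdvd1 i) (r i)
  have cardQ : Q.card ≤ ∑ j, M / m' j := by
    have hsub : Q ⊆ univ.biUnion
        (fun j => (Finset.range M).filter (fun x => x % m' j = r' j % m' j)) := by
      intro x hxQ
      obtain ⟨hxr, j, hj⟩ := mem_filter.1 hxQ
      exact Finset.mem_biUnion.2 ⟨j, mem_univ j, mem_filter.2 ⟨hxr, hj⟩⟩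
    calc Q.card ≤ _ := Finset.card_le_card hsub
      _ ≤ ∑ j, ((Finset.range M).filter (fun x => x % m' j = r' j % m' j)).card :=
          Finset.card_biUnion_le
      _ = ∑ j, M / m' j := by
          exact Finset.sum_congr rfl fun j _ => card_residues (hm' j) (hdvd2 j) (r' j)
  set F := P ∩ Q with hF
  have cardF : F.card + M = P.card + Q.card := by
    have := Finset.card_inter_add_card_union P Q
    rw [hPQ, Finset.card_range] at this
    exact this
  -- build a cover of S ∩ T by residue classes mod M
  have hcov : ((F.card : ℝ) / M) ∈ coverSet (S ∩ T) := by
    refine ⟨F.card, fun i => ((F.orderIsoOfFin rfl i : ℕ)), fun _ => M,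
      fun _ => hMpos, ?_, ?_⟩
    · rintro n ⟨hnS, hnT⟩
      have hmodP : n % M ∈ P := by
        refine mem_filter.2 ⟨Finset.mem_range.2 (Nat.mod_lt _ hMpos), ?_⟩
        obtain ⟨i, hi⟩ := Set.mem_iUnion.1 (hc hnS)
        refine ⟨i, ?_⟩
        have : n % M % m i = n % m i := Nat.mod_mod_of_dvd n (hdvd1 i)
        unfold Nat.ModEq at hi ⊢
        rw [this]; exact hi
      have hmodQ : n % M ∈ Q := by
        refine mem_filter.2 ⟨Finset.mem_range.2 (Nat.mod_lt _ hMpos), ?_⟩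
        obtain ⟨j, hj⟩ := Set.mem_iUnion.1 (hc' hnT)
        refine ⟨j, ?_⟩
        have : n % M % m' j = n % m' j := Nat.mod_mod_of_dvd n (hdvd2 j)
        unfold Nat.ModEq at hj ⊢
        rw [this]; exact hj
      have hmem : n % M ∈ F := Finset.mem_inter.2 ⟨hmodP, hmodQ⟩
      refine Set.mem_iUnion.2 ⟨(F.orderIsoOfFin rfl).symm ⟨n % M, hmem⟩, ?_⟩
      simp only [OrderIso.apply_symm_apply]
      exact (Nat.mod_modEq n M).symm
    · rw [Finset.sum_const, Finset.card_univ, Fintype.card_fin]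
      simp [div_eq_mul_inv, mul_comm]
  have hle := buckDensity_le hcov
  have hMr : (0:ℝ) < (M:ℝ) := by exact_mod_cast hMpos
  have hPr : (P.card : ℝ) ≤ (M:ℝ) * ∑ i, (1:ℝ) / m i := by
    calc (P.card : ℝ) ≤ ((∑ i, M / m i : ℕ) : ℝ) := by exact_mod_cast cardP
      _ = ∑ i, ((M / m i : ℕ) : ℝ) := by push_cast; ring
      _ ≤ ∑ i, (M:ℝ) / (m i : ℝ) := Finset.sum_le_sum fun i _ => Nat.cast_div_le
      _ = (M:ℝ) * ∑ i, (1:ℝ) / m i := by rw [Finset.mul_sum]; congr 1; ext i; ring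
  have hQr : (Q.card : ℝ) ≤ (M:ℝ) * ∑ j, (1:ℝ) / m' j := by
    calc (Q.card : ℝ) ≤ ((∑ j, M / m' j : ℕ) : ℝ) := by exact_mod_cast cardQ
      _ = ∑ j, ((M / m' j : ℕ) : ℝ) := by push_cast; ring
      _ ≤ ∑ j, (M:ℝ) / (m' j : ℝ) := Finset.sum_le_sum fun j _ => Nat.cast_div_le
      _ = (M:ℝ) * ∑ j, (1:ℝ) / m' j := by rw [Finset.mul_sum]; congr 1; ext j; ring
  have hFr : (F.card : ℝ) + M = (P.card : ℝ) + Q.card := by exact_mod_cast cardF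
  have : (F.card : ℝ) / M ≤ (∑ i, (1:ℝ) / m i) + (∑ j, (1:ℝ) / m' j) - 1 := by
    rw [div_le_iff₀ hMr]
    nlinarith [hPr, hQr, hFr]
  linarith

lemma key' {S T : Set ℕ} (hST : ∀ n, n ∈ S ∨ n ∈ T) :
    buckDensity (S ∩ T) ≤ buckDensity S + buckDensity T - 1 := by
  have h1 : ∀ x ∈ coverSet S, buckDensity (S ∩ T) - x + 1 ≤ buckDensity T := by
    intro x hx
    refine le_csInf ⟨1, one_mem T⟩ fun y hy => ?_
    linarith [key hST hx hy]
  have h2 : buckDensity (S ∩ T) - buckDensity T + 1 ≤ buckDensity S := by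
    refine le_csInf ⟨1, one_mem S⟩ fun x hx => ?_
    linarith [h1 x hx]
  linarith

lemma ge_one (S : Set ℕ) : 1 ≤ buckDensity S + buckDensity Sᶜ := by
  have := key' (S := S) (T := Sᶜ) fun n => by
    by_cases h : n ∈ S
    · exact Or.inl h
    · exact Or.inr h
  have h0 := buckDensity_nonneg (S ∩ Sᶜ)
  linarith

lemma measurable_empty : BuckMeasurable (∅ : Set ℕ) := by
  have h1 : buckDensity (Set.univ : Set ℕ) ≤ 1 := buckDensity_le (one_mem _)
  have h2 := ge_one (Set.univ : Set ℕ)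
  have h3 : buckDensity ((Set.univ : Set ℕ)ᶜ) = 0 := by
    rw [Set.compl_univ, buckDensity_empty]
  unfold BuckMeasurable
  rw [Set.compl_empty, buckDensity_empty]
  rw [h3] at h2
  linarith

lemma measurable_union {B C : Set ℕ} (hd : Disjoint B C)
    (hB : BuckMeasurable B) (hC : BuckMeasurable C) :
    BuckMeasurable (B ∪ C) ∧ buckDensity (B ∪ C) = buckDensity B + buckDensity C := by
  have hsub := buckDensity_union_le B C
  have hge := ge_one (B ∪ C)
  have hcompl : (B ∪ C)ᶜ = Bᶜ ∩ Cᶜ := Set.compl_union B C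
  have hkey : buckDensity (Bᶜ ∩ Cᶜ) ≤ buckDensity Bᶜ + buckDensity Cᶜ - 1 := by
    refine key' fun n => ?_
    by_cases h : n ∈ B
    · right
      intro hn
      exact Set.disjoint_left.1 hd h hn
    · exact Or.inl h
  rw [← hcompl] at hkey
  unfold BuckMeasurable at hB hC ⊢
  constructor
  · linarith
  · linarith

end BuckAux

namespace BuckAux

lemma finite_union (A : ℕ → Set ℕ)
    (hdisj : Pairwise (Function.onFun Disjoint A))
    (hmeas : ∀ k, BuckMeasurable (A k)) (N : ℕ) :
    BuckMeasurable (⋃ k ∈ Finset.range N, A k) ∧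
      buckDensity (⋃ k ∈ Finset.range N, A k)
        = ∑ k ∈ Finset.range N, buckDensity (A k) := by
  induction N with
  | zero => simpa using ⟨measurable_empty, buckDensity_empty⟩
  | succ N ih =>
    have hun : (⋃ k ∈ Finset.range (N+1), A k)
        = A N ∪ ⋃ k ∈ Finset.range N, A k := by
      rw [Finset.range_add_one, Finset.set_biUnion_insert]
    have hd : Disjoint (A N) (⋃ k ∈ Finset.range N, A k) := by
      rw [Set.disjoint_right]
      intro x hx hxN
      obtain ⟨k, hk, hxk⟩ := Set.mem_iUnion₂.1 hx
      have hne : N ≠ k := by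
        intro h; subst h; exact absurd hk (by simp)
      exact Set.disjoint_left.1 (hdisj hne) hxN hxk
    obtain ⟨h1, h2⟩ := measurable_union hd (hmeas N) ih.1
    rw [hun]
    refine ⟨h1, ?_⟩
    rw [h2, ih.2, Finset.sum_range_succ]
    ring

end BuckAux


open BuckAux Filter

theorem stmt_0 (A : ℕ → Set ℕ)
    (hdisj : Pairwise (Function.onFun Disjoint A))
    (hmeas : ∀ k, BuckMeasurable (A k))
    (hlim : Filter.Tendsto (fun N => buckDensity (⋃ k ≥ N, A k))
      Filter.atTop (nhds 0)) :
    BuckMeasurable (⋃ k, A k) ∧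
      HasSum (fun k => buckDensity (A k)) (buckDensity (⋃ k, A k)) := by
  set U : Set ℕ := ⋃ k, A k with hU
  set s : ℕ → ℝ := fun N => ∑ k ∈ Finset.range N, buckDensity (A k) with hs
  set t : ℕ → ℝ := fun N => buckDensity (⋃ k ≥ N, A k) with ht
  have hBN := finite_union A hdisj hmeas
  -- upper bound
  have hub : ∀ N, buckDensity U ≤ s N + t N := by
    intro N
    have hsub : U ⊆ (⋃ k ∈ Finset.range N, A k) ∪ (⋃ k ≥ N, A k) := by
      intro x hx
      obtain ⟨k, hk⟩ := Set.mem_iUnion.1 hx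
      rcases lt_or_ge k N with h | h
      · exact Or.inl (Set.mem_iUnion₂.2 ⟨k, Finset.mem_range.2 h, hk⟩)
      · exact Or.inr (Set.mem_iUnion₂.2 ⟨k, h, hk⟩)
    calc buckDensity U ≤ _ := buckDensity_mono hsub
      _ ≤ buckDensity (⋃ k ∈ Finset.range N, A k) + t N := buckDensity_union_le _ _
      _ = s N + t N := by rw [(hBN N).2]
  -- complement bound
  have hcompl : ∀ N, buckDensity Uᶜ ≤ 1 - s N := by
    intro N
    have h1 : buckDensity Uᶜ ≤ buckDensity (⋃ k ∈ Finset.range N, A k)ᶜ := by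
      apply buckDensity_mono
      apply Set.compl_subset_compl.2
      intro x hx
      obtain ⟨k, _, hxk⟩ := Set.mem_iUnion₂.1 hx
      exact Set.mem_iUnion.2 ⟨k, hxk⟩
    have h2 := (hBN N).1
    unfold BuckMeasurable at h2
    rw [(hBN N).2] at h2
    linarith
  -- lower bound
  have hlb : ∀ N, s N ≤ buckDensity U := by
    intro N
    have := ge_one U
    linarith [hcompl N]
  -- measurability
  have hle1 : buckDensity U + buckDensity Uᶜ ≤ 1 := by
    have h : ∀ N, buckDensity U + buckDensity Uᶜ ≤ 1 + t N := by
      intro N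
      linarith [hub N, hcompl N]
    have hlim' : Tendsto (fun N => 1 + t N) atTop (nhds 1) := by
      have := hlim.const_add (1:ℝ)
      simpa using this
    exact ge_of_tendsto' hlim' h
  have hmeasU : BuckMeasurable U := le_antisymm hle1 (ge_one U)
  refine ⟨hmeasU, ?_⟩
  -- partial sums tend to buckDensity U
  have htend : Tendsto s atTop (nhds (buckDensity U)) := by
    have hlow : Tendsto (fun N => buckDensity U - t N) atTop (nhds (buckDensity U)) := by
      simpa using (tendsto_const_nhds :
        Tendsto (fun _ : ℕ => buckDensity U) atTop (nhds (buckDensity U))).sub hlim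
    refine tendsto_of_tendsto_of_tendsto_of_le_of_le hlow tendsto_const_nhds
      (fun N => by linarith [hub N]) (fun N => hlb N)
    
  exact (hasSum_iff_tendsto_nat_of_nonneg (fun k => buckDensity_nonneg (A k)) _).2 htend
end

section
/- Let b_1 < b_2 < b_3 < ... be an increasing sequence of natural numbers with b_i | b_{i+1} for all i, and let H_1, H_2, H_3, ... be Buck measurable subsets of ℕ such that every element of ⋃_{i=1}^∞ H_i is relatively prime to every b_j. Then the set H = ⋃_{i=1}^∞ b_i H_i is Buck measurable and μ(H) = Σ_{i=1}^∞ μ(H_i)/b_i. -/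
open scoped BigOperators

/-!
For every modulus `M`, covering `S` by the residue classes it meets gives
`μ*(S) ≤ R(S : M) / M`, and conversely a cover of weight `w` forces `R(S : M) / M ≤ w` for all
multiples `M` of its moduli. Counting residues modulo a common multiple then shows that `μ*`
is subadditive, that `μ*(S) + μ*(Sᶜ) ≥ 1`, that `μ*(a S) ≤ μ*(S) / a`, and that removing the
multiples of `c` from a set containing them lowers `μ*` by at least `1 / c`.

Write `cᵢ = bᵢ₊₁ / bᵢ > 1` and `s_N = ∑_{i<N} μ(Hᵢ) / bᵢ`. Since `Hᵢ` is coprime to `bᵢ₊₁`,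
its elements avoid `cᵢ ℕ`. The set `H` is covered by `⋃_{i<N} bᵢ Hᵢ` and `b_N ℕ`, so
`μ*(H) ≤ s_N + 1 / b_N`. An `n ∉ H` either is not a multiple of `b₀`, or is a
multiple of `b_N`, or lies in `bᵢ (Hᵢᶜ \ cᵢ ℕ)` for the last `i < N` with `bᵢ ∣ n`; the bound
`μ*(bᵢ (Hᵢᶜ \ cᵢ ℕ)) ≤ 1 / bᵢ - 1 / bᵢ₊₁ - μ(Hᵢ) / bᵢ` telescopes to `μ*(Hᶜ) ≤ 1 - s_N`.
As `b_N → ∞`, both estimates together with `μ*(H) + μ*(Hᶜ) ≥ 1` give `s_N → μ*(H)` and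
`μ*(H) + μ*(Hᶜ) = 1`.
-/

open Filter Topology

lemma finite_image_mod (S : Set ℕ) {M : ℕ} (hM : 0 < M) : ((fun s => s % M) '' S).Finite :=
  (Set.finite_Iio M).subset <| Set.image_subset_iff.2 fun n _ => Nat.mod_lt n hM

lemma residueCount_union_le (S T : Set ℕ) (M : ℕ) :
    residueCount (S ∪ T) M ≤ residueCount S M + residueCount T M := by
  rw [residueCount, Set.image_union]
  exact Set.ncard_union_le _ _

lemma residueCount_univ {M : ℕ} (hM : 0 < M) : residueCount Set.univ M = M := by
  have : (fun s => s % M) '' Set.univ = Set.Iio M :=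
    Set.ext fun t => ⟨fun ⟨n, _, hn⟩ => hn ▸ Nat.mod_lt n hM,
      fun ht => ⟨t, trivial, Nat.mod_eq_of_lt ht⟩⟩
  rw [residueCount, this, Set.ncard_Iio_nat]

lemma residueCount_image_mul {a : ℕ} (ha : 0 < a) (S : Set ℕ) (M : ℕ) :
    residueCount ((fun s => a * s) '' S) (a * M) = residueCount S M := by
  have : (fun s => s % (a * M)) '' ((fun s => a * s) '' S)
      = (fun t => a * t) '' ((fun s => s % M) '' S) := by
    simp only [Set.image_image, Nat.mul_mod_mul_left]
  rw [residueCount, this, Set.ncard_image_of_injective _ (mul_right_injective₀ ha.ne')]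
  rfl

lemma residueCount_union_multiples {c M : ℕ} (hc : 0 < c) (hM : 0 < M) {S : Set ℕ}
    (hS : ∀ n ∈ S, ¬ c ∣ n) :
    residueCount (S ∪ {n | c ∣ n}) (c * M) = residueCount S (c * M) + M := by
  have hmul : {n | c ∣ n} = (fun s => c * s) '' Set.univ :=
    Set.ext fun n => ⟨fun ⟨k, hk⟩ => ⟨k, trivial, hk.symm⟩, fun ⟨k, _, hk⟩ => ⟨k, hk.symm⟩⟩
  have hdisj : Disjoint ((fun s => s % (c * M)) '' S) ((fun s => s % (c * M)) '' {n | c ∣ n}) := by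
    refine Set.disjoint_left.2 ?_
    rintro _ ⟨n, hn, rfl⟩ ⟨k, hk, hkn⟩
    have hdvd : c ∣ c * M := dvd_mul_right c M
    have hkn : k % (c * M) = n % (c * M) := hkn
    exact hS n hn ((Nat.dvd_mod_iff hdvd).1 (hkn ▸ (Nat.dvd_mod_iff hdvd).2 hk))
  have hcM : 0 < c * M := Nat.mul_pos hc hM
  rw [residueCount, Set.image_union, Set.ncard_union_eq hdisj (finite_image_mod _ hcM)
    (finite_image_mod _ hcM), ← residueCount, ← residueCount, hmul,
    residueCount_image_mul hc, residueCount_univ hM]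

def buckCoverSums (S : Set ℕ) : Set ℝ :=
  {x : ℝ | ∃ (k : ℕ) (r m : Fin k → ℕ), (∀ i, 0 < m i) ∧
    (S ⊆ ⋃ i, {n : ℕ | n ≡ r i [MOD m i]}) ∧ x = ∑ i, (1 : ℝ) / (m i)}

lemma residueCount_div_mem_buckCoverSums (S : Set ℕ) {M : ℕ} (hM : 0 < M) :
    (residueCount S M : ℝ) / M ∈ buckCoverSums S := by
  classical
  set T := (finite_image_mod S hM).toFinset
  refine ⟨T.card, fun i => T.equivFin.symm i, fun _ => M, fun _ => hM, ?_, ?_⟩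
  · intro n hn
    have hnT : n % M ∈ T := (Set.Finite.mem_toFinset _).2 ⟨n, hn, rfl⟩
    exact Set.mem_iUnion.2 ⟨T.equivFin ⟨n % M, hnT⟩, by simp [Nat.ModEq]⟩
  · simp [residueCount, Set.ncard_eq_toFinset_card _ (finite_image_mod S hM), T, div_eq_mul_inv]

lemma residueCount_div_le_of_cover {S : Set ℕ} {k : ℕ} {r m : Fin k → ℕ} (hm : ∀ i, 0 < m i)
    (hS : S ⊆ ⋃ i, {n : ℕ | n ≡ r i [MOD m i]}) {M : ℕ} (hM : 0 < M) (hmM : ∀ i, m i ∣ M) :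
    (residueCount S M : ℝ) / M ≤ ∑ i, (1 : ℝ) / m i := by
  classical
  have hsub : (fun s => s % M) '' S ⊆
      ⋃ i ∈ Finset.univ, ↑((Finset.range M).filter (· ≡ r i [MOD m i])) := by
    rintro _ ⟨n, hn, rfl⟩
    obtain ⟨i, hi⟩ := Set.mem_iUnion.1 (hS hn)
    simp only [Finset.mem_univ, Set.iUnion_true, Set.mem_iUnion, Finset.coe_filter,
      Finset.mem_range, Set.mem_ofPred_eq]
    exact ⟨i, Nat.mod_lt n hM, ((Nat.mod_modEq n M).of_dvd (hmM i)).trans hi⟩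
  have hcount : ∀ i, ((Finset.range M).filter (· ≡ r i [MOD m i])).card = M / m i := fun i => by
    rw [← Nat.count_eq_card_filter_range, Nat.count_modEq_card _ (hm i),
      Nat.mod_eq_zero_of_dvd (hmM i)]
    simp
  have hMR : (0 : ℝ) < M := by exact_mod_cast hM
  rw [div_le_iff₀ hMR, Finset.sum_mul]
  calc (residueCount S M : ℝ) ≤ ∑ i, ((M / m i : ℕ) : ℝ) := by
        rw [← Nat.cast_sum, Nat.cast_le, residueCount]
        refine (Set.ncard_le_ncard hsub ?_).trans ?_
        · exact (Finset.univ : Finset (Fin k)).finite_toSet.biUnion fun i _ => Finset.finite_toSet _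
        · calc _ ≤ ∑ i, (((Finset.range M).filter (· ≡ r i [MOD m i]) : Finset ℕ) : Set ℕ).ncard :=
                Finset.univ.set_ncard_biUnion_le _
            _ = _ := by simp only [Set.ncard_coe_finset, hcount]
    _ = ∑ i, 1 / (m i : ℝ) * M := by
        refine Finset.sum_congr rfl fun i _ => ?_
        rw [Nat.cast_div (hmM i) (by exact_mod_cast (hm i).ne')]
        ring

lemma buckCoverSums_nonempty (S : Set ℕ) : (buckCoverSums S).Nonempty :=
  ⟨_, residueCount_div_mem_buckCoverSums S one_pos⟩

lemma nonneg_of_mem_buckCoverSums {S : Set ℕ} {x : ℝ} (hx : x ∈ buckCoverSums S) : 0 ≤ x := by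
  obtain ⟨k, r, m, -, -, rfl⟩ := hx
  positivity

lemma buckCoverSums_bddBelow (S : Set ℕ) : BddBelow (buckCoverSums S) :=
  ⟨0, fun _ => nonneg_of_mem_buckCoverSums⟩

lemma buckDensity_nonneg (S : Set ℕ) : 0 ≤ buckDensity S :=
  le_csInf (buckCoverSums_nonempty S) fun _ => nonneg_of_mem_buckCoverSums

lemma buckDensity_le_residueCount_div (S : Set ℕ) {M : ℕ} (hM : 0 < M) :
    buckDensity S ≤ residueCount S M / M :=
  csInf_le (buckCoverSums_bddBelow S) (residueCount_div_mem_buckCoverSums S hM)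

lemma exists_residueCount_div_lt (S : Set ℕ) {ε : ℝ} (hε : 0 < ε) :
    ∃ M₀ > 0, ∀ M, 0 < M → M₀ ∣ M → (residueCount S M : ℝ) / M < buckDensity S + ε := by
  obtain ⟨_, ⟨k, r, m, hm, hS, rfl⟩, hlt⟩ :=
    exists_lt_of_csInf_lt (buckCoverSums_nonempty S) (lt_add_of_pos_right (buckDensity S) hε)
  refine ⟨∏ i, m i, Finset.prod_pos fun i _ => hm i, fun M hM hdvd => ?_⟩
  exact (residueCount_div_le_of_cover hm hS hM
    fun i => (Finset.dvd_prod_of_mem m (Finset.mem_univ i)).trans hdvd).trans_lt hlt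

lemma buckDensity_mono {S T : Set ℕ} (h : S ⊆ T) : buckDensity S ≤ buckDensity T :=
  csInf_le_csInf (buckCoverSums_bddBelow S) (buckCoverSums_nonempty T)
    fun _ ⟨k, r, m, hm, hT, hx⟩ => ⟨k, r, m, hm, h.trans hT, hx⟩

@[simp]
lemma buckDensity_empty : buckDensity ∅ = 0 :=
  le_antisymm (by simpa [residueCount] using buckDensity_le_residueCount_div ∅ one_pos)
    (buckDensity_nonneg ∅)

lemma buckDensity_univ_le_one : buckDensity Set.univ ≤ 1 := by
  simpa [residueCount_univ] using buckDensity_le_residueCount_div Set.univ one_pos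

lemma buckDensity_union_le (S T : Set ℕ) :
    buckDensity (S ∪ T) ≤ buckDensity S + buckDensity T := by
  refine le_of_forall_pos_le_add fun ε hε => ?_
  obtain ⟨M, hM, hMS⟩ := exists_residueCount_div_lt S (half_pos hε)
  obtain ⟨N, hN, hNT⟩ := exists_residueCount_div_lt T (half_pos hε)
  have hMN := Nat.mul_pos hM hN
  calc buckDensity (S ∪ T) ≤ residueCount (S ∪ T) (M * N) / (M * N : ℕ) :=
        buckDensity_le_residueCount_div _ hMN
    _ ≤ residueCount S (M * N) / (M * N : ℕ) + residueCount T (M * N) / (M * N : ℕ) := by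
        rw [← add_div]
        gcongr
        exact_mod_cast residueCount_union_le S T (M * N)
    _ ≤ buckDensity S + ε / 2 + (buckDensity T + ε / 2) :=
        add_le_add (hMS _ hMN (dvd_mul_right M N)).le (hNT _ hMN (dvd_mul_left N M)).le
    _ = buckDensity S + buckDensity T + ε := by ring

lemma buckDensity_biUnion_le {ι : Type*} (s : Finset ι) (f : ι → Set ℕ) :
    buckDensity (⋃ i ∈ s, f i) ≤ ∑ i ∈ s, buckDensity (f i) := by
  classical
  induction s using Finset.induction_on with
  | empty => simp
  | insert i s hi ih =>
    rw [Finset.set_biUnion_insert, Finset.sum_insert hi]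
    exact (buckDensity_union_le _ _).trans (add_le_add_right ih _)

lemma one_le_buckDensity_add_compl (S : Set ℕ) : 1 ≤ buckDensity S + buckDensity Sᶜ := by
  refine le_of_forall_pos_le_add fun ε hε => ?_
  obtain ⟨M, hM, hMS⟩ := exists_residueCount_div_lt S (half_pos hε)
  obtain ⟨N, hN, hNT⟩ := exists_residueCount_div_lt Sᶜ (half_pos hε)
  have hMN := Nat.mul_pos hM hN
  have hMNR : (0 : ℝ) < (M * N : ℕ) := by exact_mod_cast hMN
  calc (1 : ℝ) = residueCount Set.univ (M * N) / (M * N : ℕ) := by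
        rw [residueCount_univ hMN, div_self hMNR.ne']
    _ ≤ residueCount S (M * N) / (M * N : ℕ) + residueCount Sᶜ (M * N) / (M * N : ℕ) := by
        rw [← add_div, ← Set.union_compl_self S]
        gcongr
        exact_mod_cast residueCount_union_le S Sᶜ (M * N)
    _ ≤ buckDensity S + ε / 2 + (buckDensity Sᶜ + ε / 2) :=
        add_le_add (hMS _ hMN (dvd_mul_right M N)).le (hNT _ hMN (dvd_mul_left N M)).le
    _ = buckDensity S + buckDensity Sᶜ + ε := by ring

lemma buckDensity_image_mul_le {a : ℕ} (ha : 0 < a) (S : Set ℕ) :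
    buckDensity ((fun s => a * s) '' S) ≤ buckDensity S / a := by
  have haR : (0 : ℝ) < a := by exact_mod_cast ha
  rw [le_div_iff₀ haR]
  refine le_of_forall_pos_le_add fun ε hε => ?_
  obtain ⟨M, hM, hMS⟩ := exists_residueCount_div_lt S hε
  calc buckDensity ((fun s => a * s) '' S) * a
      ≤ residueCount ((fun s => a * s) '' S) (a * M) / (a * M : ℕ) * a := by
        gcongr
        exact buckDensity_le_residueCount_div _ (Nat.mul_pos ha hM)
    _ = residueCount S M / M := by
        rw [residueCount_image_mul ha]
        push_cast
        field_simp
    _ ≤ buckDensity S + ε := (hMS M hM dvd_rfl).le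

lemma buckDensity_diff_multiples_add_le {c : ℕ} (hc : 0 < c) {S : Set ℕ}
    (hS : {n | c ∣ n} ⊆ S) : buckDensity (S \ {n | c ∣ n}) + 1 / c ≤ buckDensity S := by
  refine le_of_forall_pos_le_add fun ε hε => ?_
  obtain ⟨M, hM, hMS⟩ := exists_residueCount_div_lt S hε
  have hsplit : residueCount S (c * M) = residueCount (S \ {n | c ∣ n}) (c * M) + M := by
    rw [← residueCount_union_multiples hc hM fun n hn => hn.2, Set.sdiff_union_of_subset hS]
  calc buckDensity (S \ {n | c ∣ n}) + 1 / c
      ≤ residueCount (S \ {n | c ∣ n}) (c * M) / (c * M : ℕ) + 1 / c := by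
        gcongr
        exact buckDensity_le_residueCount_div _ (Nat.mul_pos hc hM)
    _ = residueCount S (c * M) / (c * M : ℕ) := by
        rw [hsplit]
        push_cast
        field_simp
    _ ≤ buckDensity S + ε := (hMS _ (Nat.mul_pos hc hM) (dvd_mul_left M c)).le

lemma buckDensity_image_mul_univ_le {a : ℕ} (ha : 0 < a) :
    buckDensity ((fun s => a * s) '' Set.univ) ≤ 1 / a :=
  (buckDensity_image_mul_le ha _).trans (by gcongr; exact buckDensity_univ_le_one)

lemma buckDensity_compl_multiples_le {c : ℕ} (hc : 0 < c) :
    buckDensity (Set.univ \ {n | c ∣ n}) ≤ 1 - 1 / c := by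
  linarith [buckDensity_diff_multiples_add_le hc (Set.subset_univ _), buckDensity_univ_le_one]

lemma Nat.exists_lt_and_not_succ {p : ℕ → Prop} (h0 : p 0) {N : ℕ} (hN : ¬ p N) :
    ∃ i < N, p i ∧ ¬ p (i + 1) := by
  induction N with
  | zero => exact absurd h0 hN
  | succ N ih =>
    by_cases hp : p N
    · exact ⟨N, N.lt_succ_self, hp, hN⟩
    · obtain ⟨i, hi, h⟩ := ih hp
      exact ⟨i, hi.trans N.lt_succ_self, h⟩

section DivisibilityChain

variable {b : ℕ → ℕ}

lemma pos_of_strictMono_of_dvd_succ (hb : StrictMono b) (hbd : ∀ i, b i ∣ b (i + 1)) (i : ℕ) :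
    0 < b i :=
  Nat.pos_of_dvd_of_pos (hbd i) ((Nat.zero_le _).trans_lt (hb i.lt_succ_self))

lemma dvd_of_le_of_dvd_succ (hbd : ∀ i, b i ∣ b (i + 1)) {i j : ℕ} (hij : i ≤ j) : b i ∣ b j := by
  induction j, hij using Nat.le_induction with
  | base => exact dvd_rfl
  | succ j _ ih => exact ih.trans (hbd j)

lemma buckDensity_iUnion_image_mul_le (hb : StrictMono b) (hbd : ∀ i, b i ∣ b (i + 1))
    (H : ℕ → Set ℕ) (N : ℕ) :
    buckDensity (⋃ i, (fun s => b i * s) '' H i) ≤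
      ∑ i ∈ Finset.range N, buckDensity (H i) / b i + 1 / b N := by
  have hpos := pos_of_strictMono_of_dvd_succ hb hbd
  have hsub : ⋃ i, (fun s => b i * s) '' H i ⊆
      (⋃ i ∈ Finset.range N, (fun s => b i * s) '' H i) ∪ (fun s => b N * s) '' Set.univ := by
    refine Set.iUnion_subset fun i => ?_
    rintro _ ⟨s, hs, rfl⟩
    rcases lt_or_ge i N with hi | hi
    · exact Or.inl (Set.mem_biUnion (Finset.mem_range.2 hi) ⟨s, hs, rfl⟩)
    · obtain ⟨k, hk⟩ := dvd_of_le_of_dvd_succ hbd hi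
      exact Or.inr ⟨k * s, trivial, by simp only [hk, mul_assoc]⟩
  calc _ ≤ _ := buckDensity_mono hsub
    _ ≤ _ := buckDensity_union_le _ _
    _ ≤ _ := add_le_add
        ((buckDensity_biUnion_le _ _).trans
          (Finset.sum_le_sum fun i _ => buckDensity_image_mul_le (hpos i) _))
        (buckDensity_image_mul_univ_le (hpos N))

lemma compl_iUnion_image_mul_subset (hbd : ∀ i, b i ∣ b (i + 1)) (H : ℕ → Set ℕ) (N : ℕ) :
    (⋃ i, (fun s => b i * s) '' H i)ᶜ ⊆
      (Set.univ \ {n | b 0 ∣ n}) ∪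
        (⋃ i ∈ Finset.range N, (fun s => b i * s) '' ((H i)ᶜ \ {n | b (i + 1) / b i ∣ n})) ∪
        (fun s => b N * s) '' Set.univ := by
  intro n hn
  by_cases h0 : b 0 ∣ n
  · by_cases hN : b N ∣ n
    · obtain ⟨k, rfl⟩ := hN
      exact Or.inr ⟨k, trivial, rfl⟩
    · obtain ⟨i, hi, ⟨k, rfl⟩, hi1⟩ := Nat.exists_lt_and_not_succ (p := (b · ∣ n)) h0 hN
      refine Or.inl (Or.inr (Set.mem_biUnion (Finset.mem_range.2 hi) ⟨k, ⟨?_, ?_⟩, rfl⟩))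
      · exact fun hk => hn (Set.mem_iUnion.2 ⟨i, k, hk, rfl⟩)
      · refine fun hck => hi1 ?_
        rw [← Nat.mul_div_cancel' (hbd i)]
        exact mul_dvd_mul_left _ hck
  · exact Or.inl (Or.inl ⟨trivial, h0⟩)

lemma buckDensity_image_mul_compl_diff_le (hb : StrictMono b) (hbd : ∀ i, b i ∣ b (i + 1))
    {H : Set ℕ} (hH : BuckMeasurable H) {i : ℕ} (hcop : ∀ x ∈ H, Nat.Coprime x (b (i + 1))) :
    buckDensity ((fun s => b i * s) '' (Hᶜ \ {n | b (i + 1) / b i ∣ n})) ≤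
      (1 / b i - 1 / b (i + 1)) - buckDensity H / b i := by
  set c := b (i + 1) / b i
  have hc : 1 < c := by
    rw [Nat.lt_div_iff_mul_lt' (hbd i), mul_one]
    exact hb i.lt_succ_self
  have hcb : b i * c = b (i + 1) := Nat.mul_div_cancel' (hbd i)
  have hmult : {n | c ∣ n} ⊆ Hᶜ := fun n hcn hn =>
    hc.ne' (((hcop n hn).coprime_dvd_left hcn).eq_one_of_dvd (Nat.div_dvd_of_dvd (hbd i)))
  have hHc : buckDensity Hᶜ = 1 - buckDensity H := by
    rw [← hH]
    ring
  calc _ ≤ buckDensity (Hᶜ \ {n | c ∣ n}) / b i :=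
        buckDensity_image_mul_le (pos_of_strictMono_of_dvd_succ hb hbd i) _
    _ ≤ (buckDensity Hᶜ - 1 / c) / b i := by
        gcongr
        linarith [buckDensity_diff_multiples_add_le (zero_lt_one.trans hc) hmult]
    _ = _ := by
        rw [hHc, ← hcb]
        push_cast
        field_simp
        ring

lemma buckDensity_compl_iUnion_image_mul_le (hb : StrictMono b) (hbd : ∀ i, b i ∣ b (i + 1))
    (H : ℕ → Set ℕ) (hH : ∀ i, BuckMeasurable (H i))
    (hcop : ∀ i, ∀ x ∈ H i, Nat.Coprime x (b (i + 1))) (N : ℕ) :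
    buckDensity (⋃ i, (fun s => b i * s) '' H i)ᶜ ≤
      1 - ∑ i ∈ Finset.range N, buckDensity (H i) / b i := by
  have hpos := pos_of_strictMono_of_dvd_succ hb hbd
  calc _ ≤ _ := buckDensity_mono (compl_iUnion_image_mul_subset hbd H N)
    _ ≤ buckDensity (Set.univ \ {n | b 0 ∣ n}) +
          ∑ i ∈ Finset.range N,
            buckDensity ((fun s => b i * s) '' ((H i)ᶜ \ {n | b (i + 1) / b i ∣ n})) +
          buckDensity ((fun s => b N * s) '' Set.univ) :=
        (buckDensity_union_le _ _).trans <| add_le_add_left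
          ((buckDensity_union_le _ _).trans (add_le_add_right (buckDensity_biUnion_le _ _) _)) _
    _ ≤ (1 - 1 / b 0) +
          ∑ i ∈ Finset.range N, ((1 / b i - 1 / b (i + 1)) - buckDensity (H i) / b i) +
          1 / b N := by
        gcongr with i
        · exact buckDensity_compl_multiples_le (hpos 0)
        · exact buckDensity_image_mul_compl_diff_le hb hbd (hH i) (hcop i)
        · exact buckDensity_image_mul_univ_le (hpos N)
    _ = _ := by
        rw [Finset.sum_sub_distrib, Finset.sum_range_sub' (fun i => 1 / (b i : ℝ))]
        ring

end DivisibilityChain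

theorem stmt_1 (b : ℕ → ℕ) (hb : StrictMono b) (hbd : ∀ i, b i ∣ b (i + 1))
    (H : ℕ → Set ℕ) (hH : ∀ i, BuckMeasurable (H i))
    (hcop : ∀ x ∈ ⋃ i, H i, ∀ j, Nat.Coprime x (b j)) :
    BuckMeasurable (⋃ i, (fun s => b i * s) '' H i) ∧
      HasSum (fun i => buckDensity (H i) / (b i : ℝ))
        (buckDensity (⋃ i, (fun s => b i * s) '' H i)) := by
  set U := ⋃ i, (fun s => b i * s) '' H i
  set partialSum : ℕ → ℝ := fun N => ∑ i ∈ Finset.range N, buckDensity (H i) / b i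
  have hupper N : buckDensity U ≤ partialSum N + 1 / b N :=
    buckDensity_iUnion_image_mul_le hb hbd H N
  have hcompl N : buckDensity Uᶜ ≤ 1 - partialSum N :=
    buckDensity_compl_iUnion_image_mul_le hb hbd H hH
      (fun i x hx => hcop x (Set.mem_iUnion.2 ⟨i, hx⟩) (i + 1)) N
  have hone := one_le_buckDensity_add_compl U
  have htail : Tendsto (fun N => 1 / (b N : ℝ)) atTop (𝓝 0) :=
    tendsto_const_nhds.div_atTop (tendsto_natCast_atTop_atTop.comp hb.tendsto_atTop)
  have hpartial : Tendsto partialSum atTop (𝓝 (buckDensity U)) := by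
    refine tendsto_of_tendsto_of_tendsto_of_le_of_le (g := fun N => buckDensity U - 1 / b N)
      (by simpa using tendsto_const_nhds.sub htail) tendsto_const_nhds
      (fun N => ?_) (fun N => ?_) <;> linarith [hupper N, hcompl N]
  refine ⟨le_antisymm ?_ hone, (hasSum_iff_tendsto_nat_of_nonneg
    (fun i => div_nonneg (buckDensity_nonneg _) (Nat.cast_nonneg _)) _).2 hpartial⟩
  exact ge_of_tendsto' (by simpa only [add_zero] using tendsto_const_nhds.add htail)
    fun N => by linarith [hupper N, hcompl N]
end

section
/- Let {B_N} be a sequence of natural numbers such that for every d ∈ ℕ there exists N_0 ∈ ℕ with d | B_N for all N > N_0. Then for every S ⊆ ℕ, μ*(S) = lim_{N→∞} R(S : B_N)/B_N. -/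
open scoped BigOperators

namespace StmtAux

def DSet (S : Set ℕ) : Set ℝ :=
  {x : ℝ | ∃ (k : ℕ) (r m : Fin k → ℕ), (∀ i, 0 < m i) ∧
    (S ⊆ ⋃ i, {n : ℕ | n ≡ r i [MOD m i]}) ∧ x = ∑ i, (1 : ℝ) / (m i)}

lemma buck_eq (S : Set ℕ) : buckDensity S = sInf (DSet S) := rfl

lemma DSet_nonempty (S : Set ℕ) : (DSet S).Nonempty := by
  refine ⟨1, 1, fun _ => 0, fun _ => 1, fun _ => one_pos, ?_, by simp⟩
  intro n _
  exact Set.mem_iUnion.2 ⟨0, by simp [Nat.ModEq, Nat.mod_one]⟩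

lemma DSet_bdd (S : Set ℕ) : BddBelow (DSet S) := by
  refine ⟨0, ?_⟩
  rintro x ⟨k, r, m, hm, _, rfl⟩
  exact Finset.sum_nonneg fun i _ => by positivity

lemma residue_mem (S : Set ℕ) (m : ℕ) (hm : 0 < m) :
    ((residueCount S m : ℝ) / m) ∈ DSet S := by
  have hTfin : ((fun s => s % m) '' S).Finite := by
    apply (Set.finite_Iio m).subset
    rintro t ⟨s, _, rfl⟩
    exact Nat.mod_lt s hm
  set F := hTfin.toFinset with hF
  have hcard : residueCount S m = F.card := by
    rw [residueCount, Set.ncard_eq_toFinset_card _ hTfin]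
  refine ⟨F.card, fun i => ((F.equivFin.symm i : F) : ℕ), fun _ => m,
    fun _ => hm, ?_, ?_⟩
  · intro n hn
    have hmem : n % m ∈ F := hTfin.mem_toFinset.2 ⟨n, hn, rfl⟩
    refine Set.mem_iUnion.2 ⟨F.equivFin ⟨n % m, hmem⟩, ?_⟩
    show n ≡ ((F.equivFin.symm (F.equivFin ⟨n % m, hmem⟩) : F) : ℕ) [MOD m]
    rw [Equiv.symm_apply_apply]
    exact (Nat.mod_modEq n m).symm
  · rw [hcard]
    rw [Finset.sum_const, Finset.card_univ, Fintype.card_fin, nsmul_eq_mul]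
    ring

lemma count_le (S : Set ℕ) (Bn : ℕ) (hBn : 0 < Bn) (k : ℕ) (r m : Fin k → ℕ)
    (hm : ∀ i, 0 < m i) (hdvd : ∀ i, m i ∣ Bn)
    (hcov : S ⊆ ⋃ i, {n : ℕ | n ≡ r i [MOD m i]}) :
    residueCount S Bn ≤ ∑ i, Bn / m i := by
  set A : Fin k → Finset ℕ :=
    fun i => (Finset.range Bn).filter (fun t => t % m i = r i % m i) with hA
  set U : Finset ℕ := Finset.univ.biUnion A with hU
  have hsub : ((fun s => s % Bn) '' S) ⊆ ↑U := by
    rintro t ⟨s, hs, rfl⟩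
    obtain ⟨i, hi⟩ := Set.mem_iUnion.1 (hcov hs)
    refine Finset.mem_coe.2 (Finset.mem_biUnion.2 ⟨i, Finset.mem_univ i, ?_⟩)
    refine Finset.mem_filter.2 ⟨Finset.mem_range.2 (Nat.mod_lt s hBn), ?_⟩
    rw [Nat.mod_mod_of_dvd s (hdvd i)]
    exact hi
  have h1 : residueCount S Bn ≤ U.card := by
    have := Set.ncard_le_ncard hsub U.finite_toSet
    rwa [Set.ncard_coe_finset] at this
  refine h1.trans ((Finset.card_biUnion_le).trans ?_)
  refine Finset.sum_le_sum fun i _ => ?_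
  have : A i ⊆ Finset.range Bn := Finset.filter_subset _ _
  calc (A i).card ≤ (Finset.range (Bn / m i)).card := by
        apply Finset.card_le_card_of_injOn (fun t => t / m i)
        · intro t ht
          refine Finset.mem_range.2 ?_
          exact Nat.div_lt_div_of_lt_of_dvd (hdvd i) (Finset.mem_range.1 (Finset.mem_filter.1 ht).1)
        · intro t1 h1 t2 h2 he
          have e1 := (Finset.mem_filter.1 h1).2
          have e2 := (Finset.mem_filter.1 h2).2
          have he' : t1 / m i = t2 / m i := he
          rw [← Nat.div_add_mod t1 (m i), ← Nat.div_add_mod t2 (m i), he', e1, e2]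
    _ = Bn / m i := Finset.card_range _

end StmtAux

theorem stmt_6 (B : ℕ → ℕ) (hBpos : ∀ N, 0 < B N)
    (hB : ∀ d : ℕ, ∃ N₀ : ℕ, ∀ N > N₀, d ∣ B N) (S : Set ℕ) :
    Filter.Tendsto (fun N => (residueCount S (B N) : ℝ) / (B N : ℝ))
      Filter.atTop (nhds (buckDensity S)) := by
  rw [StmtAux.buck_eq]
  rw [tendsto_order]
  constructor
  · intro a ha
    refine Filter.Eventually.of_forall fun N => lt_of_lt_of_le ha ?_
    exact csInf_le (StmtAux.DSet_bdd S) (StmtAux.residue_mem S (B N) (hBpos N))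
  · intro a ha
    obtain ⟨x, hxD, hxa⟩ :=
      (csInf_lt_iff (StmtAux.DSet_bdd S) (StmtAux.DSet_nonempty S)).1 ha
    obtain ⟨k, r, m, hm, hcov, rfl⟩ := hxD
    obtain ⟨N₀, hN₀⟩ := hB (∏ i, m i)
    filter_upwards [Filter.eventually_gt_atTop N₀] with N hN
    have hdvd : ∀ i, m i ∣ B N := fun i =>
      (Finset.dvd_prod_of_mem m (Finset.mem_univ i)).trans (hN₀ N hN)
    have hcount := StmtAux.count_le S (B N) (hBpos N) k r m hm hdvd hcov
    have hBne : (B N : ℝ) ≠ 0 := Nat.cast_ne_zero.2 (hBpos N).ne'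
    have hstep : (residueCount S (B N) : ℝ) / (B N : ℝ) ≤ ∑ i, (1 : ℝ) / (m i) := by
      rw [div_le_iff₀ (by positivity)]
      calc (residueCount S (B N) : ℝ) ≤ ((∑ i, B N / m i : ℕ) : ℝ) := by
            exact_mod_cast hcount
        _ = ∑ i, ((B N / m i : ℕ) : ℝ) := by push_cast; ring
        _ = ∑ i, (B N : ℝ) / (m i : ℝ) := by
            refine Finset.sum_congr rfl fun i _ => ?_
            exact Nat.cast_div (hdvd i) (Nat.cast_ne_zero.2 (hm i).ne')
        _ = (∑ i, (1 : ℝ) / (m i)) * (B N : ℝ) := by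
            rw [Finset.sum_mul]
            refine Finset.sum_congr rfl fun i _ => ?_
            ring
    exact lt_of_le_of_lt hstep hxa
end

section
/- Let n ∈ ℕ satisfy τ(n) | n, and suppose the canonical factorization of n contains at least s+1 primes with odd exponent. Then 2^{s+1} | n. -/
open scoped BigOperators

theorem stmt_14 (n s : ℕ) (hτ : n.divisors.card ∣ n)
    (hodd : s + 1 ≤ {q : ℕ | q.Prime ∧ Odd (padicValNat q n)}.ncard) :
    2 ^ (s + 1) ∣ n := by
  rcases Nat.eq_zero_or_pos n with rfl | hn
  · have he : {q : ℕ | q.Prime ∧ Odd (padicValNat q 0)} = ∅ := by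
      ext q; simp [Nat.odd_iff]
    rw [he] at hodd
    simp at hodd
  ·
    set S := {q : ℕ | q.Prime ∧ Odd (padicValNat q n)} with hS
    have hsub : S ⊆ ↑n.primeFactors := by
      intro q hq
      rcases hq with ⟨hp, hoddq⟩
      simp only [Finset.mem_coe, Nat.mem_primeFactors]
      refine ⟨hp, ?_, hn.ne'⟩
      have h1 : 1 ≤ padicValNat q n := Nat.one_le_iff_ne_zero.mpr (by
        rintro h0; rw [h0] at hoddq; simp [Nat.odd_iff] at hoddq)
      calc q = q ^ 1 := (pow_one q).symm
      _ ∣ q ^ padicValNat q n := pow_dvd_pow q h1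
      _ ∣ n := pow_padicValNat_dvd
    have hfin : S.Finite := Set.Finite.subset n.primeFactors.finite_toSet hsub
    have hT : hfin.toFinset ⊆ n.primeFactors := by
      intro q hq
      exact hsub (hfin.mem_toFinset.mp hq)
    have hcard : s + 1 ≤ hfin.toFinset.card := by
      rwa [Set.ncard_eq_toFinset_card S hfin] at hodd
    have hτeq : n.divisors.card = n.factorization.prod fun _ k => k + 1 :=
      Nat.card_divisors hn.ne'
    have h2 : (2 : ℕ) ^ hfin.toFinset.card ∣ n.divisors.card := by
      rw [hτeq, Finsupp.prod, ← Finset.prod_const]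
      have hsupp : hfin.toFinset ⊆ n.factorization.support := by
        rwa [Nat.support_factorization]
      refine dvd_trans (Finset.prod_dvd_prod_of_dvd _ _ ?_)
        (Finset.prod_dvd_prod_of_subset _ _ _ hsupp)
      intro q hq
      have hq' := hfin.mem_toFinset.mp hq
      rcases hq' with ⟨hp, hoddq⟩
      have : n.factorization q = padicValNat q n := by
        simp [Nat.factorization_def n hp]
      rw [this]
      rcases hoddq with ⟨k, hk⟩
      exact ⟨k + 1, by omega⟩
    calc 2 ^ (s + 1) ∣ 2 ^ hfin.toFinset.card := pow_dvd_pow 2 hcard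
    _ ∣ n.divisors.card := h2
    _ ∣ n := hτ
end
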